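/- arXiv:2603.17620 — 4 statements merged into one kernel-verified Lean document; each statement's English description precedes it below -/
import Mathlib

section
/- Let M ≥ 2 be an integer, let φ, η ∈ (−π/2, π/2), θ ∈ [−π/2, π/2], and ϑ ∈ (−π/2, π/2). Then the sUPA array factor satisfies |f(φ,θ;η,ϑ)| ≤ M², and equality |f(φ,θ;η,ϑ)| = M² holds if and only if (φ,θ) = (η,ϑ). -/
open Real Complex Finset

/-- The Dirichlet kernel `H_M(x) = (1/M) ∑_{m=0}^{M-1} exp(iπ m x)`. -/
noncomputable def dirichletKernel (M : ℕ) (x : ℝ) : ℂ :=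
  (1 / (M : ℂ)) * ∑ m ∈ Finset.range M, Complex.exp (Complex.I * (Real.pi : ℂ) * (m : ℂ) * (x : ℂ))

/-- The sUPA array factor
`f(φ,θ;η,ϑ) = M² H_M(cos θ sin(φ−η)) H_M(sin θ cos ϑ − cos θ sin ϑ cos(φ−η))`. -/
noncomputable def sUPAFactor (M : ℕ) (φ θ η ϑ : ℝ) : ℂ :=
  (M : ℂ) ^ 2 * dirichletKernel M (Real.cos θ * Real.sin (φ - η)) *
    dirichletKernel M (Real.sin θ * Real.cos ϑ - Real.cos θ * Real.sin ϑ * Real.cos (φ - η))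

/-!
`H_M(x)` is the mean of the `M` powers `z^m` of the unit complex number `z = e^{iπx}`, so
`|H_M(x)| ≤ 1`. For `M ≥ 2` equality needs `|1 + z| = 2`, which by strict convexity of `ℂ` forces
`z = 1`, i.e. `x ∈ 2ℤ`. Both kernel arguments of the array factor lie in `[-1, 1]`, so
`|f| = M²` exactly when both vanish; on the given angle ranges this happens only at
`(φ, θ) = (η, ϑ)`.
-/

lemma norm_add_lt_two_of_ne {E : Type*} [NormedAddCommGroup E] [NormedSpace ℝ E]
    [StrictConvexSpace ℝ E] {x y : E} (hx : ‖x‖ ≤ 1) (hy : ‖y‖ ≤ 1) (hne : x ≠ y) :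
    ‖x + y‖ < 2 := by
  have h := norm_combo_lt_of_ne hx hy hne (half_pos one_pos) (half_pos one_pos) (add_halves 1)
  rw [← smul_add, norm_smul, Real.norm_of_nonneg (half_pos one_pos).le] at h
  linarith

lemma norm_geom_sum_le {z : ℂ} (hz : ‖z‖ ≤ 1) (M : ℕ) : ‖∑ m ∈ range M, z ^ m‖ ≤ M := by
  refine (norm_sum_le _ _).trans ?_
  simpa using sum_le_sum fun m (_ : m ∈ range M) =>
    (norm_pow z m).trans_le (pow_le_one₀ (norm_nonneg z) hz)

lemma norm_geom_sum_lt {z : ℂ} (hz : ‖z‖ ≤ 1) (hz1 : z ≠ 1) {M : ℕ} (hM : 2 ≤ M) :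
    ‖∑ m ∈ range M, z ^ m‖ < M := by
  obtain ⟨k, rfl⟩ := Nat.exists_eq_add_of_le hM
  have hsplit : ∑ m ∈ range (2 + k), z ^ m = (1 + z) + z ^ 2 * ∑ m ∈ range k, z ^ m := by
    simp [sum_range_add, sum_range_succ, mul_sum, pow_add]
  have htail : ‖z ^ 2 * ∑ m ∈ range k, z ^ m‖ ≤ k := by
    rw [norm_mul, norm_pow]
    exact (mul_le_of_le_one_left (norm_nonneg _) (pow_le_one₀ (norm_nonneg z) hz)).trans
      (norm_geom_sum_le hz k)
  have hhead : ‖1 + z‖ < 2 := norm_add_lt_two_of_ne norm_one.le hz hz1.symm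
  calc ‖∑ m ∈ range (2 + k), z ^ m‖ ≤ ‖1 + z‖ + ‖z ^ 2 * ∑ m ∈ range k, z ^ m‖ :=
        hsplit ▸ norm_add_le _ _
    _ < 2 + k := by linarith
    _ = ((2 + k : ℕ) : ℝ) := by push_cast; ring

lemma dirichletKernel_eq_geom_sum (M : ℕ) (x : ℝ) :
    dirichletKernel M x = (M : ℂ)⁻¹ * ∑ m ∈ range M, exp (I * π * x) ^ m := by
  rw [dirichletKernel, one_div]
  congr 1
  refine sum_congr rfl fun m _ => ?_
  rw [← Complex.exp_nat_mul]
  ring_nf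

lemma norm_exp_I_pi_mul (x : ℝ) : ‖exp (I * π * x)‖ = 1 := by
  rw [norm_exp]
  simp

lemma exp_I_pi_mul_ne_one {x : ℝ} (hx0 : x ≠ 0) (hx : |x| < 2) : exp (I * π * x) ≠ 1 := by
  intro h
  have hcos : Real.cos (π * x) = 1 := by
    have h' := congrArg Complex.re h
    rwa [show I * π * x = ((π * x : ℝ) : ℂ) * I by push_cast; ring, exp_ofReal_mul_I_re,
      one_re] at h'
  obtain ⟨hx₁, hx₂⟩ := abs_lt.mp hx
  have hπx := (Real.cos_eq_one_iff_of_lt_of_lt (by nlinarith [pi_pos]) (by nlinarith [pi_pos])).mp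
    hcos
  exact hx0 ((mul_eq_zero.mp hπx).resolve_left pi_ne_zero)

lemma norm_dirichletKernel_le_one (M : ℕ) (x : ℝ) : ‖dirichletKernel M x‖ ≤ 1 := by
  rw [dirichletKernel_eq_geom_sum, norm_mul, norm_inv, Complex.norm_natCast]
  exact inv_mul_le_one_of_le₀ (norm_geom_sum_le (norm_exp_I_pi_mul x).le M) (Nat.cast_nonneg M)

lemma norm_dirichletKernel_lt_one {M : ℕ} (hM : 2 ≤ M) {x : ℝ} (hx0 : x ≠ 0) (hx : |x| < 2) :
    ‖dirichletKernel M x‖ < 1 := by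
  rw [dirichletKernel_eq_geom_sum, norm_mul, norm_inv, Complex.norm_natCast,
    inv_mul_lt_one₀ (by positivity)]
  exact norm_geom_sum_lt (norm_exp_I_pi_mul x).le (exp_I_pi_mul_ne_one hx0 hx) hM

lemma dirichletKernel_zero {M : ℕ} (hM : M ≠ 0) : dirichletKernel M 0 = 1 := by
  simp [dirichletKernel, hM]

lemma norm_dirichletKernel_eq_one_iff {M : ℕ} (hM : 2 ≤ M) {x : ℝ} (hx : |x| < 2) :
    ‖dirichletKernel M x‖ = 1 ↔ x = 0 := by
  refine ⟨fun h => ?_, fun h => by rw [h, dirichletKernel_zero (by omega), norm_one]⟩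
  by_contra hx0
  exact (norm_dirichletKernel_lt_one hM hx0 hx).ne h

lemma mul_eq_one_iff_of_le_one {α : Type*} [Semiring α] [LinearOrder α] [IsStrictOrderedRing α]
    {a b : α} (ha₀ : 0 ≤ a) (ha : a ≤ 1) (hb₀ : 0 ≤ b) (hb : b ≤ 1) :
    a * b = 1 ↔ a = 1 ∧ b = 1 := by
  refine ⟨fun h => ⟨?_, ?_⟩, fun ⟨ha1, hb1⟩ => by rw [ha1, hb1, one_mul]⟩
  · by_contra ha1
    exact (mul_lt_one_of_nonneg_of_lt_one_left ha₀ (ha.lt_of_ne ha1) hb).ne h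
  · by_contra hb1
    exact (mul_lt_one_of_nonneg_of_lt_one_right ha hb₀ (hb.lt_of_ne hb1)).ne h

lemma abs_sin_mul_cos_sub_cos_mul_sin_mul_le_one (θ ϑ : ℝ) {t : ℝ} (ht : |t| ≤ 1) :
    |Real.sin θ * Real.cos ϑ - Real.cos θ * Real.sin ϑ * t| ≤ 1 := by
  rw [← sq_le_one_iff_abs_le_one] at ht ⊢
  -- Lagrange's identity: the square plus `(sin θ sin ϑ t + cos θ cos ϑ)²` is `cos² ϑ + sin² ϑ t²`.
  nlinarith [sq_nonneg (Real.sin θ * Real.sin ϑ * t + Real.cos θ * Real.cos ϑ),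
    Real.sin_sq_add_cos_sq θ, Real.sin_sq_add_cos_sq ϑ,
    mul_nonneg (sq_nonneg (Real.sin ϑ)) (sub_nonneg.mpr ht)]

lemma eq_of_sin_sub_eq_zero {x y : ℝ} (hx : x ∈ Set.Icc (-(π / 2)) (π / 2))
    (hy : y ∈ Set.Ioo (-(π / 2)) (π / 2)) (h : Real.sin (x - y) = 0) : x = y := by
  have hxy := (Real.sin_eq_zero_iff_of_lt_of_lt (by linarith [hx.1, hy.2])
    (by linarith [hx.2, hy.1])).mp h
  exact sub_eq_zero.mp hxy

lemma sUPA_arguments_eq_zero_iff {φ θ η ϑ : ℝ}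
    (hφ : φ ∈ Set.Ioo (-(π / 2)) (π / 2)) (hη : η ∈ Set.Ioo (-(π / 2)) (π / 2))
    (hθ : θ ∈ Set.Icc (-(π / 2)) (π / 2)) (hϑ : ϑ ∈ Set.Ioo (-(π / 2)) (π / 2)) :
    Real.cos θ * Real.sin (φ - η) = 0 ∧
        Real.sin θ * Real.cos ϑ - Real.cos θ * Real.sin ϑ * Real.cos (φ - η) = 0 ↔
      φ = η ∧ θ = ϑ := by
  refine ⟨fun ⟨hu, hv⟩ => ?_, fun ⟨hφη, hθϑ⟩ => by simp [hφη, hθϑ, mul_comm]⟩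
  have hcosθ : Real.cos θ ≠ 0 := by
    intro hc
    have hsin : Real.sin θ ≠ 0 := fun hs => by simpa [hs, hc] using Real.sin_sq_add_cos_sq θ
    rw [hc, zero_mul, zero_mul, sub_zero] at hv
    exact mul_ne_zero hsin (Real.cos_pos_of_mem_Ioo hϑ).ne' hv
  obtain rfl : φ = η :=
    eq_of_sin_sub_eq_zero (Set.Ioo_subset_Icc_self hφ) hη ((mul_eq_zero.mp hu).resolve_left hcosθ)
  refine ⟨rfl, eq_of_sin_sub_eq_zero hθ hϑ ?_⟩
  simpa [Real.sin_sub] using hv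

/-- For `M ≥ 2`, `φ, η ∈ (−π/2, π/2)`, `θ ∈ [−π/2, π/2]`, `ϑ ∈ (−π/2, π/2)`, the sUPA
array factor satisfies `|f(φ,θ;η,ϑ)| ≤ M²`, with equality iff `(φ,θ) = (η,ϑ)`. -/
theorem abs_sUPAFactor_le_max (M : ℕ) (hM : 2 ≤ M) (φ θ η ϑ : ℝ)
    (hφ : φ ∈ Set.Ioo (-(Real.pi / 2)) (Real.pi / 2))
    (hη : η ∈ Set.Ioo (-(Real.pi / 2)) (Real.pi / 2))
    (hθ : θ ∈ Set.Icc (-(Real.pi / 2)) (Real.pi / 2))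
    (hϑ : ϑ ∈ Set.Ioo (-(Real.pi / 2)) (Real.pi / 2)) :
    ‖sUPAFactor M φ θ η ϑ‖ ≤ (M : ℝ) ^ 2 ∧
      (‖sUPAFactor M φ θ η ϑ‖ = (M : ℝ) ^ 2 ↔ φ = η ∧ θ = ϑ) := by
  set u := Real.cos θ * Real.sin (φ - η)
  set v := Real.sin θ * Real.cos ϑ - Real.cos θ * Real.sin ϑ * Real.cos (φ - η)
  have hnorm : ‖sUPAFactor M φ θ η ϑ‖ =
      (M : ℝ) ^ 2 * (‖dirichletKernel M u‖ * ‖dirichletKernel M v‖) := by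
    rw [sUPAFactor, norm_mul, norm_mul, norm_pow, Complex.norm_natCast, mul_assoc]
  have hu : |u| < 2 := by
    refine lt_of_le_of_lt ?_ one_lt_two
    rw [abs_mul]
    exact mul_le_one₀ (Real.abs_cos_le_one θ) (abs_nonneg _) (Real.abs_sin_le_one _)
  have hv : |v| < 2 :=
    (abs_sin_mul_cos_sub_cos_mul_sin_mul_le_one θ ϑ (Real.abs_cos_le_one _)).trans_lt one_lt_two
  have hu₁ := norm_dirichletKernel_le_one M u
  have hv₁ := norm_dirichletKernel_le_one M v
  rw [hnorm]
  refine ⟨mul_le_of_le_one_right (by positivity) (mul_le_one₀ hu₁ (norm_nonneg _) hv₁), ?_⟩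
  rw [mul_eq_left₀ (by positivity),
    mul_eq_one_iff_of_le_one (norm_nonneg _) hu₁ (norm_nonneg _) hv₁,
    norm_dirichletKernel_eq_one_iff hM hu, norm_dirichletKernel_eq_one_iff hM hv]
  exact sUPA_arguments_eq_zero_iff hφ hη hθ hϑ
end

section
/- Let M ≥ 3 be an integer. For integers p and q, define the orientation angles ϑ_q = q·arcsin(2/M) and η_{p,q} = p·arcsin(2/(M·cos ϑ_q)), and the corresponding unit vector u(η,ϑ) = (cos ϑ·cos η, cos ϑ·sin η, sin ϑ) ∈ ℝ³. Suppose (p_a, q_a) ≠ (p_b, q_b) are two index pairs such that the elevation angles satisfy |ϑ_{q_a}|, |ϑ_{q_b}| ≤ π/2, the azimuth angles satisfy |η_{p_a,q_a}|, |η_{p_b,q_b}| ≤ π/2, and whenever M·cos ϑ_q < 2 the corresponding azimuth index p is 0 (so that arcsin(2/(M·cos ϑ_q)) is only invoked when it is defined). Then the inner product of the two orientation vectors satisfies ⟨u(η_{p_a,q_a}, ϑ_{q_a}), u(η_{p_b,q_b}, ϑ_{q_b})⟩ ≤ √(1 − 4/M²); equivalently, the angle between any two distinct sUPA orientations of the spherical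 DCAA design is at least arcsin(2/M). -/
/-!
Distinct orientations either lie in different elevation layers or in the same layer.
In the first case the angle between them is at least the elevation difference, a nonzero
multiple of `arcsin (2 / M)`. In the second, with `c = cos ϑ`, the azimuth difference is a
nonzero multiple of `arcsin (2 / (M c))`, so the inner product is at most
`c² √(1 - (2 / (M c))²) + 1 - c²`, which increases with `c ≤ 1` up to its value
`√(1 - 4 / M²)` at `c = 1`.
-/

open Real

/-- Elevation orientation angles of the spherical DCAA: `ϑ_q = q·arcsin(2/M)`. -/
noncomputable def dcaaElev (M : ℕ) (q : ℤ) : ℝ := q * Real.arcsin (2 / M)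

/-- Azimuth orientation angles of the spherical DCAA:
`η_{p,q} = p·arcsin(2/(M cos ϑ_q))`. -/
noncomputable def dcaaAzim (M : ℕ) (p q : ℤ) : ℝ :=
  p * Real.arcsin (2 / (M * Real.cos (dcaaElev M q)))

/-- The orientation unit vector `u(η,ϑ) = (cos ϑ cos η, cos ϑ sin η, sin ϑ)`. -/
noncomputable def orientVec (η ϑ : ℝ) : EuclideanSpace ℝ (Fin 3) :=
  (WithLp.equiv 2 (Fin 3 → ℝ)).symm
    ![Real.cos ϑ * Real.cos η, Real.cos ϑ * Real.sin η, Real.sin ϑ]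

lemma inner_orientVec (η₁ ϑ₁ η₂ ϑ₂ : ℝ) :
    inner ℝ (orientVec η₁ ϑ₁) (orientVec η₂ ϑ₂) =
      cos ϑ₁ * cos ϑ₂ * cos (η₁ - η₂) + sin ϑ₁ * sin ϑ₂ := by
  simp only [orientVec, WithLp.equiv_symm_apply, PiLp.inner_apply, RCLike.inner_apply,
    ringHom_apply, Fin.sum_univ_three, Fin.isValue, Matrix.cons_val_zero, Matrix.cons_val_one,
    Matrix.cons_val, cos_sub]
  ring

lemma inner_orientVec_le_cos_sub {ϑ₁ ϑ₂ : ℝ} (η₁ η₂ : ℝ) (h₁ : 0 ≤ cos ϑ₁) (h₂ : 0 ≤ cos ϑ₂) :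
    inner ℝ (orientVec η₁ ϑ₁) (orientVec η₂ ϑ₂) ≤ cos (ϑ₁ - ϑ₂) := by
  rw [inner_orientVec, cos_sub ϑ₁ ϑ₂]
  nlinarith [mul_nonneg h₁ h₂, cos_le_one (η₁ - η₂)]

lemma cos_intCast_mul_sub_intCast_mul_le {m n : ℤ} {s : ℝ} (hmn : m ≠ n) (hs : 0 ≤ s)
    (hm : |m * s| ≤ π / 2) (hn : |n * s| ≤ π / 2) :
    cos (m * s - n * s) ≤ cos s := by
  have hgap : s ≤ |m * s - n * s| := by
    have h1 : (1 : ℝ) ≤ |(m : ℝ) - n| := by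
      exact_mod_cast Int.one_le_abs (sub_ne_zero.2 hmn)
    rw [← sub_mul, abs_mul, abs_of_nonneg hs]
    exact le_mul_of_one_le_left hs h1
  have hπ : |m * s - n * s| ≤ π := (abs_sub _ _).trans (by linarith)
  rw [← cos_abs (m * s - n * s)]
  exact cos_le_cos_of_nonneg_of_le_pi hs hπ hgap

lemma sq_mul_sqrt_one_sub_div_sq_add_one_sub_sq_le {c x : ℝ} (hc : 0 < c) (hc1 : c ≤ 1)
    (hxc : x ^ 2 ≤ c ^ 2) :
    c ^ 2 * √(1 - (x / c) ^ 2) + (1 - c ^ 2) ≤ √(1 - x ^ 2) := by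
  have hc2 : c ^ 2 ≤ 1 := pow_le_one₀ hc.le hc1
  have hx1 : x ^ 2 ≤ 1 := hxc.trans hc2
  set v := √(1 - x ^ 2)
  have hv2 : v ^ 2 = 1 - x ^ 2 := sq_sqrt (by linarith)
  have hv1 : v ≤ 1 := sqrt_le_one.2 (by nlinarith)
  have hvc : 0 ≤ v - 1 + c ^ 2 := by nlinarith [sqrt_nonneg (1 - x ^ 2)]
  have hlhs : c ^ 2 * √(1 - (x / c) ^ 2) = √(c ^ 2 * (c ^ 2 - x ^ 2)) := by
    rw [show c ^ 2 * (c ^ 2 - x ^ 2) = (c ^ 2) ^ 2 * (1 - (x / c) ^ 2) by field_simp,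
      sqrt_mul (by positivity), sqrt_sq (by positivity)]
  -- `(v - 1 + c²)² - c²(c² - x²) = (1 - v)²(1 - c²)` once `v² = 1 - x²`
  have hsq : c ^ 2 * (c ^ 2 - x ^ 2) ≤ (v - 1 + c ^ 2) ^ 2 := by
    nlinarith [mul_nonneg (sq_nonneg (1 - v)) (sub_nonneg.2 hc2)]
  rw [hlhs]
  linarith [(sqrt_le_iff.2 ⟨hvc, hsq⟩ : √(c ^ 2 * (c ^ 2 - x ^ 2)) ≤ v - 1 + c ^ 2)]

lemma inner_orientVec_same_elev_le {ϑ η₁ η₂ x : ℝ} (hc : 0 < cos ϑ) (hxc : x ^ 2 ≤ cos ϑ ^ 2)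
    (hη : cos (η₁ - η₂) ≤ √(1 - (x / cos ϑ) ^ 2)) :
    inner ℝ (orientVec η₁ ϑ) (orientVec η₂ ϑ) ≤ √(1 - x ^ 2) := by
  calc inner ℝ (orientVec η₁ ϑ) (orientVec η₂ ϑ)
      = cos ϑ ^ 2 * cos (η₁ - η₂) + (1 - cos ϑ ^ 2) := by rw [inner_orientVec, ← sq (sin ϑ), sin_sq]; ring
    _ ≤ cos ϑ ^ 2 * √(1 - (x / cos ϑ) ^ 2) + (1 - cos ϑ ^ 2) := by gcongr
    _ ≤ √(1 - x ^ 2) := sq_mul_sqrt_one_sub_div_sq_add_one_sub_sq_le hc (cos_le_one ϑ) hxc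

theorem dcaa_min_angle_separation_general (M : ℕ)
    (pa qa pb qb : ℤ) (hne : (pa, qa) ≠ (pb, qb))
    (hϑa : |dcaaElev M qa| ≤ Real.pi / 2) (hϑb : |dcaaElev M qb| ≤ Real.pi / 2)
    (hηa : |dcaaAzim M pa qa| ≤ Real.pi / 2) (hηb : |dcaaAzim M pb qb| ≤ Real.pi / 2)
    (hpa : (M : ℝ) * Real.cos (dcaaElev M qa) < 2 → pa = 0)
    (hpb : (M : ℝ) * Real.cos (dcaaElev M qb) < 2 → pb = 0) :
    (inner ℝ (orientVec (dcaaAzim M pa qa) (dcaaElev M qa))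
        (orientVec (dcaaAzim M pb qb) (dcaaElev M qb)) : ℝ) ≤
      Real.sqrt (1 - 4 / (M : ℝ) ^ 2) := by
  rw [show 4 / (M : ℝ) ^ 2 = (2 / M) ^ 2 by ring]
  rcases eq_or_ne qa qb with rfl | hq
  · have hp : pa ≠ pb := fun hp => hne (by rw [hp])
    set c := cos (dcaaElev M qa)
    have hMc : 2 ≤ (M : ℝ) * c := by
      by_contra! h
      exact hp (by rw [hpa h, hpb h])
    have hc : 0 < c := pos_of_mul_pos_right (by linarith) (Nat.cast_nonneg M)
    have hxc : 2 / (M : ℝ) ≤ c := by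
      rw [div_le_iff₀ (pos_of_mul_pos_left (by linarith) hc.le)]
      linarith
    refine inner_orientVec_same_elev_le hc (pow_le_pow_left₀ (by positivity) hxc 2) ?_
    rw [div_div, ← cos_arcsin]
    exact cos_intCast_mul_sub_intCast_mul_le hp (arcsin_nonneg.2 (by positivity)) hηa hηb
  · rw [← cos_arcsin]
    exact (inner_orientVec_le_cos_sub _ _ (cos_nonneg_of_mem_Icc (abs_le.1 hϑa))
      (cos_nonneg_of_mem_Icc (abs_le.1 hϑb))).trans
      (cos_intCast_mul_sub_intCast_mul_le hq (arcsin_nonneg.2 (by positivity)) hϑa hϑb)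

/-- Minimum angular separation of the spherical DCAA design: for `M ≥ 3` and two distinct
index pairs `(p_a,q_a) ≠ (p_b,q_b)` with elevations and azimuths within `[−π/2, π/2]`
(and azimuth index forced to `0` whenever `M cos ϑ_q < 2`), the inner product of the two
orientation unit vectors is at most `√(1 − 4/M²)`; i.e., the angle between any two
distinct sUPA orientations is at least `arcsin(2/M)`. -/
theorem dcaa_min_angle_separation (M : ℕ) (hM : 3 ≤ M)
    (pa qa pb qb : ℤ) (hne : (pa, qa) ≠ (pb, qb))
    (hϑa : |dcaaElev M qa| ≤ Real.pi / 2) (hϑb : |dcaaElev M qb| ≤ Real.pi / 2)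
    (hηa : |dcaaAzim M pa qa| ≤ Real.pi / 2) (hηb : |dcaaAzim M pb qb| ≤ Real.pi / 2)
    (hpa : (M : ℝ) * Real.cos (dcaaElev M qa) < 2 → pa = 0)
    (hpb : (M : ℝ) * Real.cos (dcaaElev M qb) < 2 → pb = 0) :
    (inner ℝ (orientVec (dcaaAzim M pa qa) (dcaaElev M qa))
        (orientVec (dcaaAzim M pb qb) (dcaaElev M qb)) : ℝ) ≤
      Real.sqrt (1 - 4 / (M : ℝ) ^ 2) :=
  dcaa_min_angle_separation_general M pa qa pb qb hne hϑa hϑb hηa hηb hpa hpb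
end

section
/- Let M ≥ 3 be an integer. The function f(ϑ) = cos²ϑ·√(1 − 4/(M²·cos²ϑ)) + sin²ϑ is strictly decreasing on the interval [0, arccos(2/M)]. -/
/-! With `c = cos²ϑ` and `a = 4/M²` the function equals `√(c² - a c) - c + 1`. The map
`c ↦ √(c² - a c) - c` is strictly increasing on `[a, ∞)` because `√(c² - a c) < c - a/2` there,
while `ϑ ↦ cos²ϑ` is strictly decreasing on `[0, arccos(2/M)] ⊆ [0, π/2]` and stays `≥ a`. -/

open Real Set

lemma mul_sqrt_one_sub_div {c : ℝ} (hc : 0 < c) (a : ℝ) :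
    c * √(1 - a / c) = √(c ^ 2 - a * c) := by
  rw [show c ^ 2 - a * c = c ^ 2 * (1 - a / c) by field_simp, sqrt_mul (sq_nonneg c),
    sqrt_sq hc.le]

lemma strictMonoOn_sqrt_sq_sub_mul_sub {a : ℝ} (ha : 0 < a) :
    StrictMonoOn (fun c => √(c ^ 2 - a * c) - c) (Ici a) := by
  intro c₁ (hc₁ : a ≤ c₁) c₂ _ hc
  have hsq : √(c₁ ^ 2 - a * c₁) ^ 2 = c₁ ^ 2 - a * c₁ := sq_sqrt (by nlinarith)
  have hlt : √(c₁ ^ 2 - a * c₁) < c₁ - a / 2 := by nlinarith [sqrt_nonneg (c₁ ^ 2 - a * c₁)]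
  have hstep : √(c₁ ^ 2 - a * c₁) + (c₂ - c₁) < √(c₂ ^ 2 - a * c₂) := by
    rw [lt_sqrt (by linarith [sqrt_nonneg (c₁ ^ 2 - a * c₁)])]
    nlinarith [mul_pos (sub_pos.2 hc) (show 0 < 2 * c₁ - a by linarith)]
  simp only
  linarith

lemma strictAntiOn_cos_sq : StrictAntiOn (fun ϑ => cos ϑ ^ 2) (Icc 0 (π / 2)) := by
  intro x hx y hy hxy
  have hπ : π / 2 ≤ π := by linarith [pi_pos]
  have hcos : cos y < cos x := strictAntiOn_cos ⟨hx.1, hx.2.trans hπ⟩ ⟨hy.1, hy.2.trans hπ⟩ hxy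
  exact pow_lt_pow_left₀ hcos (cos_nonneg_of_mem_Icc ⟨by linarith [hy.1, pi_pos], hy.2⟩) two_ne_zero

lemma le_cos_of_mem_Icc_arccos {b ϑ : ℝ} (hb₁ : -1 ≤ b) (hb₂ : b ≤ 1)
    (hϑ : ϑ ∈ Icc 0 (arccos b)) : b ≤ cos ϑ := by
  calc b = cos (arccos b) := (cos_arccos hb₁ hb₂).symm
    _ ≤ cos ϑ := cos_le_cos_of_nonneg_of_le_pi hϑ.1 (arccos_le_pi b) hϑ.2

/-- For an integer `M ≥ 3`, the function
`f(ϑ) = cos²ϑ·√(1 − 4/(M² cos²ϑ)) + sin²ϑ` is strictly decreasing on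
`[0, arccos(2/M)]`. -/
theorem dcaa_cos_angle_strictAntiOn (M : ℕ) (hM : 3 ≤ M) :
    StrictAntiOn
      (fun ϑ : ℝ =>
        Real.cos ϑ ^ 2 * Real.sqrt (1 - 4 / ((M : ℝ) ^ 2 * Real.cos ϑ ^ 2)) +
          Real.sin ϑ ^ 2)
      (Set.Icc 0 (Real.arccos (2 / M))) := by
  have hM' : (3 : ℝ) ≤ M := by exact_mod_cast hM
  set a : ℝ := 4 / (M : ℝ) ^ 2
  have ha : 0 < a := by positivity
  have hcos : ∀ ϑ ∈ Icc 0 (arccos (2 / M)), a ≤ cos ϑ ^ 2 := fun ϑ hϑ =>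
    calc a = (2 / M) ^ 2 := by ring
      _ ≤ cos ϑ ^ 2 := pow_le_pow_left₀ (by positivity)
          (le_cos_of_mem_Icc_arccos (by linarith [show 0 ≤ (2 : ℝ) / M by positivity])
            ((div_le_one (by positivity)).2 (by linarith)) hϑ) 2
  have hf : ∀ ϑ ∈ Icc 0 (arccos (2 / M)), cos ϑ ^ 2 * √(1 - 4 / ((M : ℝ) ^ 2 * cos ϑ ^ 2))
      + sin ϑ ^ 2 = √((cos ϑ ^ 2) ^ 2 - a * cos ϑ ^ 2) - cos ϑ ^ 2 + 1 := fun ϑ hϑ => by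
    rw [← div_div, mul_sqrt_one_sub_div (ha.trans_le (hcos ϑ hϑ)), sin_sq]
    ring
  have hIcc : Icc 0 (arccos (2 / M)) ⊆ Icc 0 (π / 2) :=
    Icc_subset_Icc_right (arccos_le_pi_div_two.2 (by positivity))
  have hcomp := (strictMonoOn_sqrt_sq_sub_mul_sub ha).comp_strictAntiOn
    (strictAntiOn_cos_sq.mono hIcc) hcos
  intro x hx y hy hxy
  have hlt := hcomp hx hy hxy
  simp only [Function.comp_apply] at hlt
  simp only [hf x hx, hf y hy]
  linarith
end

section
/- Let M ≥ 3 be an integer. For every ϑ ∈ [0, arccos(2/M)], one has cos²ϑ·√(1 − 4/(M²·cos²ϑ)) + sin²ϑ ≤ √(1 − 4/M²), with equality if and only if ϑ = 0. Equivalently, the angle between two sUPA orientations at the same elevation ϑ whose azimuths differ by arcsin(2/(M·cos ϑ)) is at least arcsin(2/M). -/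
/-!
Put `a = 4/M²` and `c = cos ϑ`, so that `a ≤ c² ≤ 1` and the left side minus `1` is
`c² (√(1 - a/c²) - 1)`, while the right side minus `1` is the same expression at `c² = 1`.
Rationalising, `y (√(1 - a/y) - 1) = -a / (1 + √(1 - a/y))`, which is strictly increasing
in `y ≥ a`; hence the inequality, with equality exactly when `c² = 1`, i.e. `ϑ = 0`.
-/

open Real

lemma mul_sqrt_one_sub_div_sub_self {a y : ℝ} (hy : 0 < y) (hay : a ≤ y) :
    y * √(1 - a / y) - y = -a / (1 + √(1 - a / y)) := by
  have hs : √(1 - a / y) ^ 2 = 1 - a / y :=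
    sq_sqrt (sub_nonneg.mpr ((div_le_one hy).mpr hay))
  have hden : 0 < 1 + √(1 - a / y) := by positivity
  rw [eq_div_iff hden.ne']
  linear_combination y * hs - mul_div_cancel₀ a hy.ne'

lemma strictMonoOn_mul_sqrt_one_sub_div_sub_self {a : ℝ} (ha : 0 < a) :
    StrictMonoOn (fun y => y * √(1 - a / y) - y) (Set.Ici a) := by
  intro y (hy : a ≤ y) z (hz : a ≤ z) hyz
  have hy₀ : 0 < y := ha.trans_le hy
  simp only [mul_sqrt_one_sub_div_sub_self hy₀ hy, mul_sqrt_one_sub_div_sub_self (hy₀.trans hyz) hz,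
    neg_div, neg_lt_neg_iff]
  have hsqrt : √(1 - a / y) < √(1 - a / z) :=
    sqrt_lt_sqrt (sub_nonneg.mpr ((div_le_one hy₀).mpr hy))
      (sub_lt_sub_left (div_lt_div_of_pos_left ha hy₀ hyz) 1)
  exact div_lt_div_of_pos_left ha (by positivity) (by linarith)

lemma le_cos_of_mem_Icc_arccos_s14 {x ϑ : ℝ} (hx₁ : -1 ≤ x) (hx₂ : x ≤ 1)
    (hϑ : ϑ ∈ Set.Icc 0 (arccos x)) : x ≤ cos ϑ :=
  cos_arccos hx₁ hx₂ ▸ cos_le_cos_of_nonneg_of_le_pi hϑ.1 (arccos_le_pi x) hϑ.2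

/-- For an integer `M ≥ 3` and every `ϑ ∈ [0, arccos(2/M)]`,
`cos²ϑ·√(1 − 4/(M² cos²ϑ)) + sin²ϑ ≤ √(1 − 4/M²)`, with equality iff `ϑ = 0`;
i.e., the angle between two same-elevation sUPA orientations whose azimuths differ by
`arcsin(2/(M cos ϑ))` is at least `arcsin(2/M)`. -/
theorem dcaa_same_elevation_cos_angle_le (M : ℕ) (hM : 3 ≤ M) (ϑ : ℝ)
    (hϑ : ϑ ∈ Set.Icc 0 (Real.arccos (2 / M))) :
    Real.cos ϑ ^ 2 * Real.sqrt (1 - 4 / ((M : ℝ) ^ 2 * Real.cos ϑ ^ 2)) + Real.sin ϑ ^ 2 ≤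
        Real.sqrt (1 - 4 / (M : ℝ) ^ 2) ∧
      (Real.cos ϑ ^ 2 * Real.sqrt (1 - 4 / ((M : ℝ) ^ 2 * Real.cos ϑ ^ 2)) + Real.sin ϑ ^ 2 =
          Real.sqrt (1 - 4 / (M : ℝ) ^ 2) ↔ ϑ = 0) := by
  have hM₀ : (0 : ℝ) < M := by positivity
  have hcos : 2 / (M : ℝ) ≤ cos ϑ :=
    le_cos_of_mem_Icc_arccos_s14 (by linarith [div_nonneg zero_le_two hM₀.le])
      ((div_le_one hM₀).mpr (by exact_mod_cast (by omega : 2 ≤ M))) hϑ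
  have ha : (0 : ℝ) < 4 / M ^ 2 := by positivity
  have hac : 4 / (M : ℝ) ^ 2 ≤ cos ϑ ^ 2 := by
    simpa only [div_pow, show (2 : ℝ) ^ 2 = 4 by norm_num] using
      pow_le_pow_left₀ (by positivity) hcos 2
  have hc₁ : cos ϑ ^ 2 ≤ 1 := cos_sq_le_one ϑ
  set f := fun y : ℝ => y * √(1 - 4 / (M : ℝ) ^ 2 / y) - y
  have hlhs : cos ϑ ^ 2 * √(1 - 4 / ((M : ℝ) ^ 2 * cos ϑ ^ 2)) + sin ϑ ^ 2 = f (cos ϑ ^ 2) + 1 := by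
    rw [← div_div, sin_sq]; ring
  have hrhs : √(1 - 4 / (M : ℝ) ^ 2) = f 1 + 1 := by simp [f]
  have hc_one : cos ϑ ^ 2 = 1 ↔ ϑ = 0 := by
    have hϑπ : ϑ ≤ π := hϑ.2.trans (arccos_le_pi _)
    rw [← one_pow 2, pow_left_inj₀ ((div_pos two_pos hM₀).le.trans hcos) zero_le_one two_ne_zero,
      cos_eq_one_iff_of_lt_of_lt (by linarith [hϑ.1, pi_pos]) (by linarith [pi_pos])]
  have hf := strictMonoOn_mul_sqrt_one_sub_div_sub_self ha
  rw [hlhs, hrhs, add_le_add_iff_right, add_left_inj, hf.le_iff_le hac (hac.trans hc₁),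
    hf.eq_iff_eq hac (hac.trans hc₁), hc_one]
  exact ⟨hc₁, Iff.rfl⟩
end
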